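/- arXiv:0811.0783 — 3 statements merged into one kernel-verified Lean document; each statement's English description precedes it below -/
import Mathlib

section
/- (Molnár's joint measurability criterion) Let a, b ∈ ℝ³ be nonzero, non-parallel vectors (a is not a real scalar multiple of b) with ‖a‖ ≤ 1 and ‖b‖ ≤ 1. Then the simple qubit observables E^{‖a‖,a} and E^{‖b‖,b} are jointly measurable if and only if ‖a + b‖ + ‖a‖ + ‖b‖ ≤ 2. -/
/-!
`A^{γ,v}` has trace `γ` and determinant `(γ² - ‖v‖²)/4`, so it is positive iff `‖v‖ ≤ γ`;
its adjugate is `A^{γ,-v}`, so `A^{‖v‖,-v}` maps into the kernel of `A^{‖v‖,v}`.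

A joint observable `G` of two-outcome observables is determined by `C = G(1,1)`, subject to
`0 ≤ C ≤ E(1), F(1)` and `I - E(1) - F(1) + C ≥ 0`. For `E^{‖a‖,a}` and `E^{‖b‖,b}` the bounds
`0 ≤ C ≤ A^{‖a‖,a}, A^{‖b‖,b}` force `C` to vanish on both kernels, hence `C` annihilates
`‖b‖ A^{‖a‖,-a} + ‖a‖ A^{‖b‖,-b} = A^{2‖a‖‖b‖, -(‖b‖a + ‖a‖b)}`, which is invertible by the
strict triangle inequality for non-parallel `a, b`. So `C = 0`, and what remains is
`I - A^{‖a‖,a} - A^{‖b‖,b} = A^{2-‖a‖-‖b‖, -(a+b)} ≥ 0`, i.e. `‖a + b‖ ≤ 2 - ‖a‖ - ‖b‖`.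
-/

open Matrix
open scoped ComplexOrder

noncomputable section

/-- 2×2 complex matrices. -/
abbrev Mat2 := Matrix (Fin 2) (Fin 2) ℂ

/-- The Pauli matrix σ₁. -/
def sigma1 : Mat2 := !![0, 1; 1, 0]
/-- The Pauli matrix σ₂. -/
def sigma2 : Mat2 := !![0, -Complex.I; Complex.I, 0]
/-- The Pauli matrix σ₃. -/
def sigma3 : Mat2 := !![1, 0; 0, -1]

/-- ℝ³ with the Euclidean norm. -/
abbrev E3 := EuclideanSpace ℝ (Fin 3)

/-- For `v ∈ ℝ³`, `v·σ = v₁σ₁ + v₂σ₂ + v₃σ₃`. -/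
def dotSigma (v : E3) : Mat2 := (v 0 : ℂ) • sigma1 + (v 1 : ℂ) • sigma2 + (v 2 : ℂ) • sigma3

/-- `A^{α,a} = (1/2)(α·I + a·σ)`. -/
def Amat (α : ℝ) (a : E3) : Mat2 := (2 : ℂ)⁻¹ • ((α : ℂ) • (1 : Mat2) + dotSigma a)

/-- An operator is an effect if `0 ≤ A ≤ I` in the Loewner order. -/
def IsEffect (A : Mat2) : Prop := A.PosSemidef ∧ (1 - A).PosSemidef

/-- The Loewner order: `A ≤ B` iff `B - A` is positive semidefinite. -/
def loewnerLE (A B : Mat2) : Prop := (B - A).PosSemidef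

/-- The simple (two-outcome) qubit observable `E^{α,a}`,
with `E^{α,a}(1) = A^{α,a}` and `E^{α,a}(0) = I - A^{α,a}`. -/
def Eobs (α : ℝ) (a : E3) : Fin 2 → Mat2 := fun i => if i = 1 then Amat α a else 1 - Amat α a

/-- `G` is a joint observable of the two-outcome observables `E` and `F`. -/
def IsJointObs (G : Fin 2 → Fin 2 → Mat2) (E F : Fin 2 → Mat2) : Prop :=
  (∀ i j, (G i j).PosSemidef) ∧ (∑ i, ∑ j, G i j) = 1 ∧
    (∀ i, (∑ j, G i j) = E i) ∧ (∀ j, (∑ i, G i j) = F j)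

/-- Joint measurability of two two-outcome observables. -/
def JointlyMeasurable2 (E F : Fin 2 → Mat2) : Prop := ∃ G, IsJointObs G E F

/-- `G` is a joint observable of the three two-outcome observables `E`, `F` and `K`. -/
def IsJointObs3 (G : Fin 2 → Fin 2 → Fin 2 → Mat2) (E F K : Fin 2 → Mat2) : Prop :=
  (∀ i j k, (G i j k).PosSemidef) ∧ (∑ i, ∑ j, ∑ k, G i j k) = 1 ∧
    (∀ i, (∑ j, ∑ k, G i j k) = E i) ∧ (∀ j, (∑ i, ∑ k, G i j k) = F j) ∧
    (∀ k, (∑ i, ∑ j, G i j k) = K k)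

/-- Joint measurability of three two-outcome observables. -/
def JointlyMeasurable3 (E F K : Fin 2 → Mat2) : Prop := ∃ G, IsJointObs3 G E F K

theorem Matrix.PosSemidef.mulVec_eq_zero_of_sub_posSemidef {n 𝕜 : Type*} [Fintype n]
    [RCLike 𝕜] {G A : Matrix n n 𝕜} (hG : G.PosSemidef) (hAG : (A - G).PosSemidef) {w : n → 𝕜}
    (hw : A *ᵥ w = 0) : G *ᵥ w = 0 := by
  refine (hG.dotProduct_mulVec_zero_iff w).mp (le_antisymm ?_ (hG.dotProduct_mulVec_nonneg w))
  have h := hAG.dotProduct_mulVec_nonneg w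
  rwa [sub_mulVec, dotProduct_sub, hw, dotProduct_zero, zero_sub, neg_nonneg] at h

theorem Matrix.PosSemidef.mul_eq_zero_of_sub_posSemidef {m n 𝕜 : Type*} [Fintype n] [RCLike 𝕜]
    {G A : Matrix n n 𝕜} {B : Matrix n m 𝕜} (hG : G.PosSemidef) (hAG : (A - G).PosSemidef)
    (hAB : A * B = 0) : G * B = 0 := by
  ext i j
  exact congrFun (hG.mulVec_eq_zero_of_sub_posSemidef hAG (w := fun k => B k j)
    (funext fun i => congrFun (congrFun hAB i) j)) i

theorem norm_smul_add_norm_smul_lt {E : Type*} [NormedAddCommGroup E] [NormedSpace ℝ E]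
    [StrictConvexSpace ℝ E] {a b : E} (hb : b ≠ 0) (hab : ¬∃ t : ℝ, a = t • b) :
    ‖‖b‖ • a + ‖a‖ • b‖ < 2 * ‖a‖ * ‖b‖ := by
  have ha : a ≠ 0 := fun h => hab ⟨0, by simp [h]⟩
  have hnot : ¬SameRay ℝ (‖b‖ • a) (‖a‖ • b) := by
    intro h
    obtain ⟨r, -, hr⟩ := h.exists_nonneg_right (smul_ne_zero (norm_ne_zero_iff.mpr ha) hb)
    refine hab ⟨‖b‖⁻¹ * r * ‖a‖, ?_⟩
    rw [mul_smul, mul_smul, ← hr, inv_smul_smul₀ (norm_ne_zero_iff.mpr hb)]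
  calc ‖‖b‖ • a + ‖a‖ • b‖ < ‖‖b‖ • a‖ + ‖‖a‖ • b‖ := norm_add_lt_of_not_sameRay hnot
    _ = 2 * ‖a‖ * ‖b‖ := by simp only [norm_smul, norm_norm]; ring

lemma jointlyMeasurable2_iff {E F : Fin 2 → Mat2} (hE : E 0 = 1 - E 1) (hF : F 0 = 1 - F 1) :
    JointlyMeasurable2 E F ↔ ∃ C : Mat2, C.PosSemidef ∧ (E 1 - C).PosSemidef ∧
      (F 1 - C).PosSemidef ∧ (1 - E 1 - F 1 + C).PosSemidef := by
  constructor
  · rintro ⟨G, hG, -, hrow, hcol⟩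
    have hr := hrow 1
    have hc := hcol 1
    have hr0 := hrow 0
    simp only [Fin.sum_univ_two] at hr hc hr0
    refine ⟨G 1 1, hG 1 1, ?_, ?_, ?_⟩
    · rw [← hr, add_sub_cancel_right]
      exact hG 1 0
    · rw [← hc, add_sub_cancel_right]
      exact hG 0 1
    · have h00 : G 0 0 = 1 - E 1 - F 1 + G 1 1 := by
        rw [eq_sub_of_add_eq hr0, hE, ← hc]
        abel
      exact h00 ▸ hG 0 0
  · rintro ⟨C, hC, hEC, hFC, hD⟩
    refine ⟨![![1 - E 1 - F 1 + C, F 1 - C], ![E 1 - C, C]], ?_, ?_, ?_, ?_⟩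
    · intro i j
      fin_cases i <;> fin_cases j <;> assumption
    · simp [Fin.sum_univ_two]
    · intro i
      fin_cases i <;> simp [Fin.sum_univ_two, hE]
    · intro j
      fin_cases j <;> simp [Fin.sum_univ_two, hF]
      abel

lemma Amat_eq (γ : ℝ) (v : E3) :
    Amat γ v = !![((γ + v 2 : ℝ) : ℂ) / 2, ((v 0 : ℂ) - Complex.I * v 1) / 2;
                  ((v 0 : ℂ) + Complex.I * v 1) / 2, ((γ - v 2 : ℝ) : ℂ) / 2] := by
  ext i j
  fin_cases i <;> fin_cases j <;>
    simp [Amat, dotSigma, sigma1, sigma2, sigma3] <;> ring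

lemma E3.norm_sq_eq (v : E3) : ‖v‖ ^ 2 = v 0 ^ 2 + v 1 ^ 2 + v 2 ^ 2 := by
  simp [EuclideanSpace.real_norm_sq_eq, Fin.sum_univ_three]

lemma Amat_add (γ δ : ℝ) (u v : E3) : Amat γ u + Amat δ v = Amat (γ + δ) (u + v) := by
  ext i j
  fin_cases i <;> fin_cases j <;> simp [Amat_eq] <;> ring

lemma Amat_sub (γ δ : ℝ) (u v : E3) : Amat γ u - Amat δ v = Amat (γ - δ) (u - v) := by
  ext i j
  fin_cases i <;> fin_cases j <;> simp [Amat_eq] <;> ring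

lemma smul_Amat (c γ : ℝ) (v : E3) : (c : ℂ) • Amat γ v = Amat (c * γ) (c • v) := by
  ext i j
  fin_cases i <;> fin_cases j <;> simp [Amat_eq] <;> ring

lemma Amat_two_zero : Amat 2 0 = 1 := by
  ext i j
  fin_cases i <;> fin_cases j <;> simp [Amat_eq]

lemma Amat_zero_right (γ : ℝ) : Amat γ 0 = ((γ / 2 : ℝ) : ℂ) • 1 := by
  ext i j
  fin_cases i <;> fin_cases j <;> simp [Amat_eq]

lemma conjTranspose_Amat (γ : ℝ) (v : E3) : (Amat γ v)ᴴ = Amat γ v := by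
  ext i j
  fin_cases i <;> fin_cases j <;> simp [Amat_eq]
  ring

lemma adjugate_Amat (γ : ℝ) (v : E3) : (Amat γ v).adjugate = Amat γ (-v) := by
  rw [Amat_eq, Amat_eq, adjugate_fin_two_of]
  ext i j
  fin_cases i <;> fin_cases j <;> simp <;> ring

lemma det_Amat (γ : ℝ) (v : E3) : (Amat γ v).det = (((γ ^ 2 - ‖v‖ ^ 2) / 4 : ℝ) : ℂ) := by
  rw [Amat_eq, det_fin_two_of, E3.norm_sq_eq]
  push_cast
  linear_combination ((v 1 : ℂ) ^ 2 / 4) * Complex.I_sq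

lemma trace_Amat (γ : ℝ) (v : E3) : (Amat γ v).trace = γ := by
  rw [Amat_eq, trace_fin_two_of]
  push_cast
  ring

lemma Amat_mul_Amat_neg (γ : ℝ) (v : E3) :
    Amat γ v * Amat γ (-v) = (((γ ^ 2 - ‖v‖ ^ 2) / 4 : ℝ) : ℂ) • 1 := by
  rw [← adjugate_Amat, mul_adjugate, det_Amat]

lemma Amat_norm_mul_Amat_neg (v : E3) : Amat ‖v‖ v * Amat ‖v‖ (-v) = 0 := by
  simp [Amat_mul_Amat_neg]

lemma Amat_norm_mul_self (v : E3) :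
    Amat ‖v‖ v * Amat ‖v‖ v = (‖v‖ : ℂ) • Amat ‖v‖ v := by
  have hsum : Amat ‖v‖ v + Amat ‖v‖ (-v) = (‖v‖ : ℂ) • 1 := by
    rw [Amat_add, add_neg_cancel, Amat_zero_right]
    norm_num
  calc Amat ‖v‖ v * Amat ‖v‖ v = Amat ‖v‖ v * ((‖v‖ : ℂ) • 1 - Amat ‖v‖ (-v)) := by
        rw [← hsum, add_sub_cancel_right]
    _ = (‖v‖ : ℂ) • Amat ‖v‖ v := by
        rw [mul_sub, Amat_norm_mul_Amat_neg, sub_zero, mul_smul_comm, mul_one]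

lemma posSemidef_Amat_norm (v : E3) : (Amat ‖v‖ v).PosSemidef := by
  rcases eq_or_ne v 0 with rfl | hv
  · simpa [Amat_zero_right] using PosSemidef.zero
  · have hpos : (0 : ℂ) < ‖v‖ := Complex.zero_lt_real.mpr (norm_pos_iff.mpr hv)
    have h := (posSemidef_conjTranspose_mul_self (Amat ‖v‖ v)).smul (inv_nonneg.mpr hpos.le)
    rwa [conjTranspose_Amat, Amat_norm_mul_self, smul_smul, inv_mul_cancel₀ hpos.ne',
      one_smul] at h

lemma posSemidef_Amat_iff {γ : ℝ} {v : E3} : (Amat γ v).PosSemidef ↔ ‖v‖ ≤ γ := by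
  constructor
  · intro h
    have htr := h.trace_nonneg
    have hdet := h.det_nonneg
    rw [trace_Amat, Complex.zero_le_real] at htr
    rw [det_Amat, Complex.zero_le_real] at hdet
    exact (pow_le_pow_iff_left₀ (norm_nonneg v) htr two_ne_zero).mp (by linarith)
  · intro h
    have hsplit : Amat γ v = Amat (γ - ‖v‖) 0 + Amat ‖v‖ v := by rw [Amat_add]; simp
    rw [hsplit, Amat_zero_right]
    exact (PosSemidef.one.smul (Complex.zero_le_real.mpr (by linarith))).add
      (posSemidef_Amat_norm v)

lemma eq_zero_of_sub_posSemidef_Amat_norm {a b : E3} (hb : b ≠ 0) (hab : ¬∃ t : ℝ, a = t • b)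
    {C : Mat2} (hC : C.PosSemidef) (hCa : (Amat ‖a‖ a - C).PosSemidef)
    (hCb : (Amat ‖b‖ b - C).PosSemidef) : C = 0 := by
  set M := (‖b‖ : ℂ) • Amat ‖a‖ (-a) + (‖a‖ : ℂ) • Amat ‖b‖ (-b) with hMdef
  have hCM : C * M = 0 := by
    rw [mul_add, mul_smul_comm, mul_smul_comm,
      hC.mul_eq_zero_of_sub_posSemidef hCa (Amat_norm_mul_Amat_neg a),
      hC.mul_eq_zero_of_sub_posSemidef hCb (Amat_norm_mul_Amat_neg b), smul_zero, smul_zero,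
      add_zero]
  have hM : M = Amat (2 * ‖a‖ * ‖b‖) (-(‖b‖ • a + ‖a‖ • b)) := by
    rw [hMdef, smul_Amat, smul_Amat, Amat_add]
    congr 1 <;> [ring; module]
  have hdet : IsUnit M.det := by
    have := norm_smul_add_norm_smul_lt hb hab
    rw [hM, det_Amat, isUnit_iff_ne_zero, Complex.ofReal_ne_zero, norm_neg]
    nlinarith [norm_nonneg (‖b‖ • a + ‖a‖ • b)]
  calc C = C * M * M⁻¹ := (mul_nonsing_inv_cancel_right M C hdet).symm
    _ = 0 := by rw [hCM, zero_mul]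

lemma Eobs_one (γ : ℝ) (v : E3) : Eobs γ v 1 = Amat γ v := rfl

lemma Eobs_zero (γ : ℝ) (v : E3) : Eobs γ v 0 = 1 - Amat γ v := rfl

theorem molnar_criterion_general (a b : E3) (hb0 : b ≠ 0)
    (hpar : ¬ ∃ t : ℝ, a = t • b) :
    JointlyMeasurable2 (Eobs ‖a‖ a) (Eobs ‖b‖ b) ↔ ‖a + b‖ + ‖a‖ + ‖b‖ ≤ 2 := by
  have hG00 : (1 : Mat2) - Amat ‖a‖ a - Amat ‖b‖ b = Amat (2 - ‖a‖ - ‖b‖) (-(a + b)) := by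
    rw [← Amat_two_zero, Amat_sub, Amat_sub, zero_sub, neg_add']
  rw [jointlyMeasurable2_iff (Eobs_zero _ _) (Eobs_zero _ _), Eobs_one, Eobs_one]
  constructor
  · rintro ⟨C, hC, hCa, hCb, hCrest⟩
    obtain rfl := eq_zero_of_sub_posSemidef_Amat_norm hb0 hpar hC hCa hCb
    rw [add_zero, hG00, posSemidef_Amat_iff, norm_neg] at hCrest
    linarith
  · intro h
    refine ⟨0, .zero, ?_, ?_, ?_⟩
    · simpa using posSemidef_Amat_norm a
    · simpa using posSemidef_Amat_norm b
    · rw [add_zero, hG00, posSemidef_Amat_iff, norm_neg]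
      linarith

/-- Molnár: for nonzero non-parallel `a`, `b`, the observables
`E^{‖a‖,a}` and `E^{‖b‖,b}` are jointly measurable iff `‖a + b‖ + ‖a‖ + ‖b‖ ≤ 2`. -/
theorem molnar_criterion (a b : E3) (ha0 : a ≠ 0) (hb0 : b ≠ 0)
    (hpar : ¬ ∃ t : ℝ, a = t • b) (ha : ‖a‖ ≤ 1) (hb : ‖b‖ ≤ 1) :
    JointlyMeasurable2 (Eobs ‖a‖ a) (Eobs ‖b‖ b) ↔ ‖a + b‖ + ‖a‖ + ‖b‖ ≤ 2 :=
  molnar_criterion_general a b hb0 hpar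
end
end

section
/- (Busch–Andersson et al. criterion for three orthogonal qubit observables) Let a, b, c ∈ ℝ³ be mutually orthogonal vectors with ‖a‖ ≤ 1, ‖b‖ ≤ 1, ‖c‖ ≤ 1. Then the three simple qubit observables E^{1,a}, E^{1,b}, E^{1,c} are jointly measurable if and only if ‖a‖² + ‖b‖² + ‖c‖² ≤ 1. -/
open Matrix
open scoped ComplexOrder

noncomputable section

/-!
Put `v_{ijk} = ε_i a + ε_j b + ε_k c` with signs `ε ∈ {±1}`; by orthogonality every `v_{ijk}` has
norm `√S`, where `S = ‖a‖² + ‖b‖² + ‖c‖²`. The operator `t I + w·σ` is positive when `‖w‖ ≤ t`.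
If `G` is a joint observable, pairing `G(ijk) ≥ 0` with `√S I - v_{ijk}·σ ≥ 0` gives
`tr(G(ijk) v_{ijk}·σ) ≤ √S tr G(ijk)`. Summing over `ijk`, the margins turn the left side into
`tr((a·σ)² + (b·σ)² + (c·σ)²) = 2S` and the right side into `2√S`, so `S ≤ √S`, i.e. `S ≤ 1`.
Conversely, if `S ≤ 1` then `G(ijk) = (I + v_{ijk}·σ)/8` is a joint observable.
-/

open scoped MatrixOrder in
theorem Matrix.PosSemidef.trace_mul_nonneg {𝕜 n : Type*} [RCLike 𝕜] [Fintype n] [DecidableEq n]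
    {A B : Matrix n n 𝕜} (hA : A.PosSemidef) (hB : B.PosSemidef) : 0 ≤ (A * B).trace := by
  set R := CFC.sqrt A
  have hRR : R * R = A := CFC.sqrt_mul_sqrt_self A hA.nonneg
  have hR : Rᴴ = R := (CFC.sqrt_nonneg A).posSemidef.isHermitian
  rw [← hRR, mul_assoc, trace_mul_comm]
  simpa [hR] using (hB.conjTranspose_mul_mul_same R).trace_nonneg

lemma norm_add_add_sq_of_inner_eq_zero {V : Type*} [NormedAddCommGroup V] [InnerProductSpace ℝ V]
    {x y z : V} (hxy : inner ℝ x y = 0) (hxz : inner ℝ x z = 0) (hyz : inner ℝ y z = 0) :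
    ‖x + y + z‖ ^ 2 = ‖x‖ ^ 2 + ‖y‖ ^ 2 + ‖z‖ ^ 2 := by
  rw [norm_add_sq_real, norm_add_sq_real, inner_add_left, hxy, hxz, hyz]
  ring

lemma dotSigma_add (v w : E3) : dotSigma (v + w) = dotSigma v + dotSigma w := by
  simp only [dotSigma, PiLp.add_apply, Complex.ofReal_add, add_smul]
  abel

lemma dotSigma_smul (r : ℝ) (v : E3) : dotSigma (r • v) = r • dotSigma v := by
  simp only [dotSigma, PiLp.smul_apply, smul_eq_mul, Complex.ofReal_mul, mul_smul, smul_add,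
    Complex.coe_smul]

lemma dotSigma_neg (v : E3) : dotSigma (-v) = -dotSigma v := by
  simpa using dotSigma_smul (-1) v

lemma isHermitian_dotSigma (v : E3) : (dotSigma v).IsHermitian := by
  ext i j
  fin_cases i <;> fin_cases j <;> simp [dotSigma, sigma1, sigma2, sigma3]

lemma dotSigma_mul_self (v : E3) : dotSigma v * dotSigma v = ‖v‖ ^ 2 • (1 : Mat2) := by
  rw [EuclideanSpace.norm_sq_eq]
  ext i j
  fin_cases i <;> fin_cases j <;>
    simp only [dotSigma, sigma1, sigma2, sigma3, Fin.isValue, smul_of, smul_cons, smul_eq_mul,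
      mul_zero, mul_one, smul_empty, mul_neg, of_add_of, add_cons, head_cons, add_zero, tail_cons,
      empty_add_empty, zero_add, Fin.zero_eta, Fin.mk_one, Matrix.mul_apply, of_apply, cons_val',
      cons_val_fin_one, cons_val_zero, cons_val_one, Fin.sum_univ_two, neg_mul, neg_neg,
      Real.norm_eq_abs, sq_abs, Fin.sum_univ_three, Matrix.smul_apply, one_apply_eq, one_apply_ne,
      ne_eq, zero_ne_one, one_ne_zero, not_false_eq_true, smul_zero, Complex.real_smul,
      Complex.ofReal_add, Complex.ofReal_pow] <;>
    ring_nf <;> simp only [Complex.I_sq] <;> ring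

lemma posSemidef_smul_one_add_dotSigma {t : ℝ} {w : E3} (hw : ‖w‖ ≤ t) :
    (t • (1 : Mat2) + dotSigma w).PosSemidef := by
  set r := ‖w‖
  set N : Mat2 := r • 1 + dotSigma w
  have hN : N.PosSemidef := by
    rcases (norm_nonneg w).eq_or_lt with hr | hr
    · simpa [N, r, norm_eq_zero.mp hr.symm, dotSigma] using (PosSemidef.zero : (0 : Mat2).PosSemidef)
    · have hNh : Nᴴ = N := by
        simp [N, conjTranspose_smul, (isHermitian_dotSigma w).eq]
      -- `N = Nᴴ N / 2r`, because `(w·σ)² = ‖w‖² I`.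
      have hNN : N * N = (2 * r) • N := by
        simp only [N, add_mul, mul_add, smul_mul_assoc, mul_smul_comm, one_mul, mul_one,
          dotSigma_mul_self]
        module
      have := (posSemidef_conjTranspose_mul_self N).smul (inv_nonneg.mpr (by positivity : 0 ≤ 2 * r))
      rwa [hNh, hNN, smul_smul, inv_mul_cancel₀ (by positivity), one_smul] at this
  have : t • (1 : Mat2) + dotSigma w = (t - r) • 1 + N := by
    simp only [N, sub_smul]
    abel
  rw [this]
  exact (PosSemidef.one.smul (sub_nonneg.mpr hw)).add hN

lemma trace_mul_dotSigma_le {M : Mat2} (hM : M.PosSemidef) (w : E3) :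
    (M * dotSigma w).trace ≤ ‖w‖ * M.trace := by
  have h := hM.trace_mul_nonneg (posSemidef_smul_one_add_dotSigma (norm_neg w).le)
  rwa [dotSigma_neg, ← sub_eq_add_neg, mul_sub, trace_sub, mul_smul_comm, mul_one, trace_smul,
    sub_nonneg, Complex.real_smul] at h

def outcomeSign : Fin 2 → ℝ := ![-1, 1]

lemma abs_outcomeSign (i : Fin 2) : |outcomeSign i| = 1 := by
  fin_cases i <;> simp [outcomeSign]

def unbiasedObs (A : Mat2) : Fin 2 → Mat2 := fun i => (2⁻¹ : ℝ) • (1 + outcomeSign i • A)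

lemma Eobs_one_s5 (a : E3) : Eobs 1 a = unbiasedObs (dotSigma a) := by
  ext1 i
  fin_cases i <;>
    simp only [Eobs, Amat, unbiasedObs, outcomeSign, Fin.zero_eta, Fin.mk_one, Fin.isValue,
      zero_ne_one, ↓reduceIte, Complex.ofReal_one, one_smul, smul_add, cons_val_zero, cons_val_one,
      cons_val_fin_one, neg_smul, smul_neg] <;>
    module

lemma sum_unbiasedObs_mul_smul (A : Mat2) :
    ∑ i, unbiasedObs A i * (outcomeSign i • A) = A * A := by
  simp only [unbiasedObs, outcomeSign, Fin.sum_univ_two, Fin.isValue, cons_val_zero, cons_val_one,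
    cons_val_fin_one, neg_smul, one_smul, smul_add, add_mul, smul_mul_assoc, mul_smul_comm, one_mul]
  module

lemma IsJointObs3.sum_mul_add_add {G : Fin 2 → Fin 2 → Fin 2 → Mat2} {E F K : Fin 2 → Mat2}
    (hG : IsJointObs3 G E F K) (x y z : Fin 2 → Mat2) :
    ∑ i, ∑ j, ∑ k, G i j k * (x i + y j + z k) =
      ∑ i, E i * x i + ∑ j, F j * y j + ∑ k, K k * z k := by
  obtain ⟨-, -, hE, hF, hK⟩ := hG
  simp only [← hE, ← hF, ← hK, Fin.sum_univ_two]
  noncomm_ring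

lemma isJointObs3_unbiasedObs {A B C : Mat2}
    (h : ∀ i j k, (1 + outcomeSign i • A + outcomeSign j • B + outcomeSign k • C).PosSemidef) :
    IsJointObs3
      (fun i j k => (8⁻¹ : ℝ) • (1 + outcomeSign i • A + outcomeSign j • B + outcomeSign k • C))
      (unbiasedObs A) (unbiasedObs B) (unbiasedObs C) := by
  refine ⟨fun i j k => (h i j k).smul (by norm_num), ?_, fun i => ?_, fun i => ?_, fun i => ?_⟩
  all_goals
    try fin_cases i
    all_goals
      simp only [unbiasedObs, outcomeSign, Fin.sum_univ_two, Fin.zero_eta, Fin.mk_one, Fin.isValue,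
        cons_val_zero, cons_val_one, cons_val_fin_one, neg_smul, one_smul]
      module

lemma sum_sq_norm_le_of_isJointObs3 {G : Fin 2 → Fin 2 → Fin 2 → Mat2} {a b c : E3} {s : ℝ}
    (hG : IsJointObs3 G (Eobs 1 a) (Eobs 1 b) (Eobs 1 c))
    (hs : ∀ i j k, ‖outcomeSign i • a + outcomeSign j • b + outcomeSign k • c‖ ≤ s) :
    ‖a‖ ^ 2 + ‖b‖ ^ 2 + ‖c‖ ^ 2 ≤ s := by
  rw [Eobs_one_s5, Eobs_one_s5, Eobs_one_s5] at hG
  set X : Fin 2 → Fin 2 → Fin 2 → Mat2 := fun i j k =>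
    dotSigma (outcomeSign i • a + outcomeSign j • b + outcomeSign k • c)
  have bound (i j k : Fin 2) : (G i j k * X i j k).trace ≤ s * (G i j k).trace :=
    (trace_mul_dotSigma_le (hG.1 i j k) _).trans
      (mul_le_mul_of_nonneg_right (by exact_mod_cast hs i j k) (hG.1 i j k).trace_nonneg)
  have h : ((2 * (‖a‖ ^ 2 + ‖b‖ ^ 2 + ‖c‖ ^ 2) : ℝ) : ℂ) ≤ ((2 * s : ℝ) : ℂ) :=
    calc ((2 * (‖a‖ ^ 2 + ‖b‖ ^ 2 + ‖c‖ ^ 2) : ℝ) : ℂ)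
        = (∑ i, ∑ j, ∑ k, G i j k * X i j k).trace := by
          simp only [X, dotSigma_add, dotSigma_smul]
          rw [hG.sum_mul_add_add (fun i => outcomeSign i • dotSigma a)
            (fun j => outcomeSign j • dotSigma b) (fun k => outcomeSign k • dotSigma c)]
          simp only [sum_unbiasedObs_mul_smul, dotSigma_mul_self, trace_add, trace_smul, trace_one,
            Fintype.card_fin, Complex.real_smul]
          push_cast
          ring
      _ = ∑ i, ∑ j, ∑ k, (G i j k * X i j k).trace := by simp only [trace_sum]
      _ ≤ ∑ i, ∑ j, ∑ k, s * (G i j k).trace := by gcongr with i _ j _ k _; exact bound i j k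
      _ = ((2 * s : ℝ) : ℂ) := by
          simp only [← Finset.mul_sum, ← trace_sum, hG.2.1, trace_one, Fintype.card_fin]
          push_cast
          ring
  norm_cast at h
  linarith

lemma norm_signed_sum_sq {a b c : E3} (hab : inner ℝ a b = 0) (hac : inner ℝ a c = 0)
    (hbc : inner ℝ b c = 0) (i j k : Fin 2) :
    ‖outcomeSign i • a + outcomeSign j • b + outcomeSign k • c‖ ^ 2 =
      ‖a‖ ^ 2 + ‖b‖ ^ 2 + ‖c‖ ^ 2 := by
  rw [norm_add_add_sq_of_inner_eq_zero (by simp [inner_smul_left, inner_smul_right, hab])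
    (by simp [inner_smul_left, inner_smul_right, hac])
    (by simp [inner_smul_left, inner_smul_right, hbc])]
  simp [norm_smul, abs_outcomeSign]

theorem three_orthogonal_criterion_general (a b c : E3)
    (hab : (inner ℝ a b : ℝ) = 0) (hac : (inner ℝ a c : ℝ) = 0) (hbc : (inner ℝ b c : ℝ) = 0) :
    JointlyMeasurable3 (Eobs 1 a) (Eobs 1 b) (Eobs 1 c) ↔
      ‖a‖ ^ 2 + ‖b‖ ^ 2 + ‖c‖ ^ 2 ≤ 1 := by
  set S := ‖a‖ ^ 2 + ‖b‖ ^ 2 + ‖c‖ ^ 2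
  have hnorm := norm_signed_sum_sq hab hac hbc
  constructor
  · rintro ⟨G, hG⟩
    have hS : S ≤ √S := sum_sq_norm_le_of_isJointObs3 hG fun i j k =>
      Real.le_sqrt_of_sq_le (hnorm i j k).le
    have hS0 : 0 ≤ S := by positivity
    nlinarith [(Real.le_sqrt hS0 hS0).mp hS]
  · intro hS
    rw [Eobs_one_s5, Eobs_one_s5, Eobs_one_s5]
    refine ⟨_, isJointObs3_unbiasedObs fun i j k => ?_⟩
    have hv : ‖outcomeSign i • a + outcomeSign j • b + outcomeSign k • c‖ ≤ 1 :=
      (sq_le_one_iff₀ (norm_nonneg _)).mp ((hnorm i j k).trans_le hS)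
    simpa only [dotSigma_add, dotSigma_smul, one_smul, add_assoc] using
      posSemidef_smul_one_add_dotSigma hv

/-- Busch, Andersson et al.: for mutually orthogonal `a`, `b`, `c`,
the observables `E^{1,a}`, `E^{1,b}`, `E^{1,c}` are jointly measurable iff
`‖a‖² + ‖b‖² + ‖c‖² ≤ 1`. -/
theorem three_orthogonal_criterion (a b c : E3)
    (hab : (inner ℝ a b : ℝ) = 0) (hac : (inner ℝ a c : ℝ) = 0) (hbc : (inner ℝ b c : ℝ) = 0)
    (ha : ‖a‖ ≤ 1) (hb : ‖b‖ ≤ 1) (hc : ‖c‖ ≤ 1) :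
    JointlyMeasurable3 (Eobs 1 a) (Eobs 1 b) (Eobs 1 c) ↔
      ‖a‖ ^ 2 + ‖b‖ ^ 2 + ‖c‖ ^ 2 ≤ 1 :=
  three_orthogonal_criterion_general a b c hab hac hbc
end
end

section
/- Let a ∈ ℝ³ with 0 < ‖a‖ < 1, let β ∈ ℝ with (1/2)(1 − ‖a‖²) < β < 1 − ‖a‖², and let b ∈ ℝ³ with a·b = 0 and ‖b‖ = β. Then the simple qubit observables E^{1,a} and E^{β,b} are jointly measurable, but they have no maximal joint observable: there is no joint observable G of E^{1,a} and E^{β,b} such that for all i, j ∈ {0,1} the effect G(i,j) is a maximal element of lb(E^{1,a}(i), E^{β,b}(j)). -/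
open Matrix
open scoped ComplexOrder

noncomputable section

/-- `C` is a maximal element of `lb(A,B)`: it is an effect below both `A` and `B`, and
there is no effect `D` below both `A` and `B` with `C ≤ D` and `C ≠ D`. -/
def IsMaximalLB (C A B : Mat2) : Prop :=
  (IsEffect C ∧ loewnerLE C A ∧ loewnerLE C B) ∧
    ¬ ∃ D : Mat2, (IsEffect D ∧ loewnerLE D A ∧ loewnerLE D B) ∧ loewnerLE C D ∧ C ≠ D

/-!
Since `‖b‖ = β`, the effect `B = A^{β,b}` satisfies `B² = βB`: it is `β` times a rank-one
projection, so every effect below `B` is a multiple `ρB`. As `a ⊥ b`, Pythagoras gives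
`‖±a - t b‖ = 1 - tβ` for `t = (1 - ‖a‖²)/(2β)`, so `tB` lies below `B` and below both
`E^{1,a}(0)` and `E^{1,a}(1)`. In a joint observable with maximal entries, maximality therefore
forces `G(0,1) = ρ₀B` and `G(1,1) = ρ₁B` with `ρ₀, ρ₁ ≥ t`; but these sum to `B`, so
`1 = ρ₀ + ρ₁ ≥ 2t > 1` because `β < 1 - ‖a‖²`. Joint measurability is witnessed by the joint
observable with `G(1,1) = tB`, the other entries being fixed by the marginals.
-/

lemma Matrix.IsHermitian.posSemidef_of_mul_self_eq_smul {n 𝕜 : Type*} [Fintype n] [RCLike 𝕜]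
    {A : Matrix n n 𝕜} {s : ℝ} (hA : A.IsHermitian) (hs : 0 ≤ s) (h : A * A = s • A) :
    A.PosSemidef := by
  rcases hs.eq_or_lt with rfl | hs
  · have hA0 : Aᴴ * A = 0 := by rw [hA.eq, h, zero_smul]
    exact conjTranspose_mul_self_eq_zero.1 hA0 ▸ PosSemidef.zero
  · have hA' : A = s⁻¹ • (Aᴴ * A) := by
      rw [hA.eq, h, smul_smul, inv_mul_cancel₀ hs.ne', one_smul]
    rw [hA']
    exact (posSemidef_conjTranspose_mul_self A).smul (inv_nonneg.2 hs.le)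

lemma Matrix.PosSemidef.mul_eq_zero_of_sub_posSemidef_s15 {n m 𝕜 : Type*} [Fintype n] [Fintype m]
    [RCLike 𝕜] {B C : Matrix n n 𝕜} {M : Matrix n m 𝕜} (hC : C.PosSemidef)
    (hBC : (B - C).PosSemidef) (hBM : B * M = 0) : C * M = 0 := by
  refine ext_iff_mulVec.2 fun v => ?_
  rw [zero_mulVec, ← mulVec_mulVec]
  have hBx : B *ᵥ (M *ᵥ v) = 0 := by rw [mulVec_mulVec, hBM, zero_mulVec]
  have hle := hBC.dotProduct_mulVec_nonneg (M *ᵥ v)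
  rw [sub_mulVec, hBx, zero_sub, dotProduct_neg, neg_nonneg] at hle
  exact (hC.dotProduct_mulVec_zero_iff _).1 (le_antisymm hle (hC.dotProduct_mulVec_nonneg _))

lemma amat_eq_matrix (α : ℝ) (v : E3) :
    Amat α v = !![((α : ℂ) + v 2) / 2, ((v 0 : ℂ) - v 1 * Complex.I) / 2;
                  ((v 0 : ℂ) + v 1 * Complex.I) / 2, ((α : ℂ) - v 2) / 2] := by
  ext i j
  fin_cases i <;> fin_cases j <;>
    simp [Amat, dotSigma, sigma1, sigma2, sigma3] <;> ring

lemma amat_add (α α' : ℝ) (v v' : E3) : Amat α v + Amat α' v' = Amat (α + α') (v + v') := by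
  simp only [Amat, dotSigma, PiLp.add_apply, Complex.ofReal_add]
  module

lemma amat_smul (r α : ℝ) (v : E3) : r • Amat α v = Amat (r * α) (r • v) := by
  simp only [Amat, dotSigma, PiLp.smul_apply, smul_eq_mul, Complex.ofReal_mul]
  module

lemma amat_neg (α : ℝ) (v : E3) : -Amat α v = Amat (-α) (-v) := by
  simp only [Amat, dotSigma, PiLp.neg_apply, Complex.ofReal_neg]
  module

lemma amat_sub (α α' : ℝ) (v v' : E3) : Amat α v - Amat α' v' = Amat (α - α') (v - v') := by
  rw [sub_eq_add_neg, amat_neg, amat_add, sub_eq_add_neg, sub_eq_add_neg]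

lemma amat_zero_right (α : ℝ) : Amat α 0 = (α / 2) • (1 : Mat2) := by
  simp only [Amat, dotSigma, PiLp.zero_apply, Complex.ofReal_zero, zero_smul, add_zero]
  module

lemma one_sub_amat (α : ℝ) (v : E3) : 1 - Amat α v = Amat (2 - α) (-v) := by
  rw [show (1 : Mat2) = Amat 2 0 by norm_num [amat_zero_right], amat_sub, zero_sub]

lemma isHermitian_amat (α : ℝ) (v : E3) : (Amat α v).IsHermitian := by
  rw [Matrix.IsHermitian, amat_eq_matrix]
  ext i j
  fin_cases i <;> fin_cases j <;> simp [Complex.ext_iff]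

lemma amat_inj {α α' : ℝ} {v v' : E3} : Amat α v = Amat α' v' ↔ α = α' ∧ v = v' := by
  refine ⟨fun h => ?_, fun h => by rw [h.1, h.2]⟩
  rw [amat_eq_matrix, amat_eq_matrix] at h
  have h00 := congrFun (congrFun h 0) 0
  have h10 := congrFun (congrFun h 1) 0
  have h11 := congrFun (congrFun h 1) 1
  simp only [Fin.isValue, of_apply, cons_val', cons_val_zero, cons_val_one, cons_val_fin_one, ne_eq,
    OfNat.ofNat_ne_zero, not_false_eq_true, div_left_inj', Complex.ext_iff, Complex.add_re,
    Complex.sub_re, Complex.mul_re, Complex.ofReal_re, Complex.I_re, Complex.add_im, Complex.sub_im,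
    Complex.mul_im, Complex.ofReal_im, Complex.I_im, mul_zero, mul_one, add_zero, zero_add,
    sub_self, and_true] at h00 h10 h11
  obtain ⟨h0, h1⟩ := h10
  refine ⟨by linarith, ?_⟩
  ext i
  fin_cases i
  exacts [h0, h1, show v 2 = v' 2 by linarith]

lemma amat_ne_zero {α : ℝ} (hα : α ≠ 0) (v : E3) : Amat α v ≠ 0 :=
  fun h => hα (amat_inj.1 (h.trans (by simp [amat_zero_right]) : Amat α v = Amat 0 0)).1

lemma amat_mul_add_mul_swap (α β : ℝ) (v w : E3) :
    Amat α v * Amat β w + Amat β w * Amat α v = Amat (α * β + inner ℝ v w) (α • w + β • v) := by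
  simp only [amat_eq_matrix, PiLp.inner_apply, RCLike.inner_apply, Fin.sum_univ_three, conj_trivial]
  ext i j
  fin_cases i <;> fin_cases j <;> simp [Complex.ext_iff] <;> constructor <;> ring

lemma amat_norm_mul_self (v : E3) : Amat ‖v‖ v * Amat ‖v‖ v = ‖v‖ • Amat ‖v‖ v := by
  have h : (2 : ℝ) • (Amat ‖v‖ v * Amat ‖v‖ v) = (2 : ℝ) • (‖v‖ • Amat ‖v‖ v) := by
    rw [two_smul, amat_mul_add_mul_swap, smul_smul, amat_smul, real_inner_self_eq_norm_sq]
    congr 1 <;> [ring; module]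
  exact smul_right_injective Mat2 two_ne_zero h

lemma exists_amat_of_isHermitian {C : Mat2} (hC : C.IsHermitian) : ∃ γ w, C = Amat γ w := by
  have h00 := hC.apply 0 0
  have h11 := hC.apply 1 1
  have h01 := hC.apply 0 1
  refine ⟨(C 0 0 + C 1 1).re, !₂[2 * (C 1 0).re, 2 * (C 1 0).im, (C 0 0 - C 1 1).re], ?_⟩
  rw [amat_eq_matrix]
  simp only [Complex.ext_iff, Complex.star_def, Complex.conj_re, Complex.conj_im] at h00 h11 h01
  ext i j
  fin_cases i <;> fin_cases j <;> simp [Complex.ext_iff] <;> grind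

lemma posSemidef_amat {α : ℝ} {v : E3} (h : ‖v‖ ≤ α) : (Amat α v).PosSemidef := by
  have hsplit : Amat α v = Amat ‖v‖ v + Amat (α - ‖v‖) 0 := by
    rw [amat_add]; congr 1 <;> simp
  rw [hsplit, amat_zero_right]
  exact ((isHermitian_amat _ _).posSemidef_of_mul_self_eq_smul (norm_nonneg v)
    (amat_norm_mul_self v)).add (PosSemidef.one.smul (by linarith))

lemma loewnerLE_amat {α α' : ℝ} {v v' : E3} (h : ‖v' - v‖ ≤ α' - α) :
    loewnerLE (Amat α v) (Amat α' v') := by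
  rw [loewnerLE, amat_sub]
  exact posSemidef_amat h

lemma isEffect_amat {α : ℝ} {v : E3} (h₀ : ‖v‖ ≤ α) (h₁ : ‖v‖ ≤ 2 - α) : IsEffect (Amat α v) :=
  ⟨posSemidef_amat h₀, by rw [one_sub_amat]; exact posSemidef_amat (by rwa [norm_neg])⟩

/-- `C ≤ B` kills the kernel of `B`, so `CB = BC = βC`; by `amat_mul_add_mul_swap` the Bloch vector
of `C` is then parallel to `b`. -/
lemma eq_smul_amat_of_posSemidef_of_le {β : ℝ} {b : E3} (hb : ‖b‖ = β) (hβ : 0 < β) {C : Mat2}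
    (hC : C.PosSemidef) (hle : (Amat β b - C).PosSemidef) : ∃ ρ : ℝ, C = ρ • Amat β b := by
  subst hb
  set B := Amat ‖b‖ b
  have hB : B * ((‖b‖ : ℝ) • 1 - B) = 0 := by
    rw [mul_sub, mul_smul_comm, mul_one, amat_norm_mul_self, sub_self]
  have hCB : C * B = ‖b‖ • C := by
    have h := hC.mul_eq_zero_of_sub_posSemidef_s15 hle hB
    rwa [mul_sub, mul_smul_comm, mul_one, sub_eq_zero, eq_comm] at h
  have hBC : B * C = ‖b‖ • C := by
    have hBh : Bᴴ = B := (isHermitian_amat _ _).eq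
    simpa [conjTranspose_mul, hC.1.eq, hBh] using congrArg conjTranspose hCB
  obtain ⟨γ, w, rfl⟩ := exists_amat_of_isHermitian hC.1
  have h := amat_mul_add_mul_swap γ ‖b‖ w b
  rw [hCB, hBC, ← two_smul ℝ, smul_smul, amat_smul, amat_inj] at h
  have hw : ‖b‖ • w = γ • b := by linear_combination (norm := module) h.2
  refine ⟨γ / ‖b‖, ?_⟩
  rw [amat_smul, div_mul_cancel₀ _ hβ.ne', div_eq_inv_mul, mul_smul, ← hw, smul_smul,
    inv_mul_cancel₀ hβ.ne', one_smul]

lemma eobs_zero (α : ℝ) (v : E3) : Eobs α v 0 = 1 - Amat α v := by simp [Eobs]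

lemma eobs_one (α : ℝ) (v : E3) : Eobs α v 1 = Amat α v := by simp [Eobs]

lemma isJointObs_of_posSemidef {E F : Fin 2 → Mat2} (hE : E 0 = 1 - E 1) (hF : F 0 = 1 - F 1)
    {C : Mat2} (h₀₀ : (1 - E 1 - F 1 + C).PosSemidef) (h₀₁ : (F 1 - C).PosSemidef)
    (h₁₀ : (E 1 - C).PosSemidef) (h₁₁ : C.PosSemidef) :
    IsJointObs ![![1 - E 1 - F 1 + C, F 1 - C], ![E 1 - C, C]] E F := by
  refine ⟨fun i j => ?_, ?_, fun i => ?_, fun j => ?_⟩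
  · fin_cases i <;> fin_cases j <;> assumption
  · simp [Fin.sum_univ_two]
  · fin_cases i <;> simp [Fin.sum_univ_two, hE]
  · fin_cases j
    · simp only [Fin.isValue, Fin.zero_eta, cons_val', cons_val_zero, cons_val_one,
        cons_val_fin_one, Fin.sum_univ_two, hF]
      abel
    · simp [Fin.sum_univ_two]

lemma exists_eq_smul_ge_of_isMaximalLB {β t : ℝ} {b : E3} (hb : ‖b‖ = β) (hβ : 0 < β)
    {C E : Mat2} (hC : IsMaximalLB C E (Amat β b))
    (hD : IsEffect (t • Amat β b) ∧ loewnerLE (t • Amat β b) E ∧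
      loewnerLE (t • Amat β b) (Amat β b)) :
    ∃ ρ : ℝ, C = ρ • Amat β b ∧ t ≤ ρ := by
  obtain ⟨⟨hCeff, -, hCB⟩, hmax⟩ := hC
  obtain ⟨ρ, rfl⟩ := eq_smul_amat_of_posSemidef_of_le hb hβ hCeff.1 hCB
  refine ⟨ρ, rfl, not_lt.1 fun hρt => hmax ⟨_, hD, ?_, ?_⟩⟩
  · rw [loewnerLE, ← sub_smul]
    exact (posSemidef_amat hb.le).smul (sub_nonneg.2 hρt.le)
  · exact fun h => hρt.ne (smul_left_injective ℝ (amat_ne_zero hβ.ne' b) h)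

lemma norm_smul_add_smul_le {a b : E3} (hab : inner ℝ a b = 0) {x y r : ℝ} (hr : 0 ≤ r)
    (h : x ^ 2 * ‖a‖ ^ 2 + y ^ 2 * ‖b‖ ^ 2 ≤ r ^ 2) : ‖x • a + y • b‖ ≤ r := by
  have hxy : inner ℝ (x • a) (y • b) = 0 := by
    rw [real_inner_smul_left, real_inner_smul_right, hab, mul_zero, mul_zero]
  rw [← sq_le_sq₀ (norm_nonneg _) hr, sq, norm_add_sq_eq_norm_sq_add_norm_sq_real hxy,
    ← sq, ← sq, norm_smul, norm_smul, mul_pow, mul_pow, Real.norm_eq_abs, Real.norm_eq_abs,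
    sq_abs, sq_abs]
  exact h

lemma smul_amat_isLowerBound {a b : E3} {β t : ℝ} (hab : inner ℝ a b = 0) (hb : ‖b‖ = β)
    (ht₀ : 0 ≤ t) (ht₁ : t ≤ 1) (htβ : 2 * t * β = 1 - ‖a‖ ^ 2) (i : Fin 2) :
    IsEffect (t • Amat β b) ∧ loewnerLE (t • Amat β b) (Eobs 1 a i) ∧
      loewnerLE (t • Amat β b) (Amat β b) := by
  have htb : ‖t • b‖ = t * β := by rw [norm_smul, Real.norm_of_nonneg ht₀, hb]
  have hbound (s : ℝ) (hs : s ^ 2 = 1) : ‖s • a + (-t) • b‖ ≤ 1 - t * β :=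
    norm_smul_add_smul_le hab (by nlinarith [sq_nonneg ‖a‖])
      (by rw [hs, hb]; nlinarith)
  rw [amat_smul]
  refine ⟨isEffect_amat htb.le (by rw [htb]; nlinarith [sq_nonneg ‖a‖]), ?_, loewnerLE_amat ?_⟩
  · match i with
    | 0 =>
      rw [eobs_zero, one_sub_amat]
      refine loewnerLE_amat ((le_of_eq ?_).trans ((hbound (-1) (by norm_num)).trans_eq ?_))
      · congr 1; module
      · ring
    | 1 =>
      rw [eobs_one]
      refine loewnerLE_amat ((le_of_eq ?_).trans (hbound 1 (by norm_num)))
      congr 1; module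
  · rw [show b - t • b = (1 - t) • b by module, norm_smul, Real.norm_of_nonneg (by linarith), hb]
    linarith

lemma jointlyMeasurable_eobs {a b : E3} {β t : ℝ} (hab : inner ℝ a b = 0) (hb : ‖b‖ = β)
    (ht₁ : t ≤ 1) (htβ : 2 * t * β = 1 - ‖a‖ ^ 2) (ht : 1 ≤ 2 * t) :
    JointlyMeasurable2 (Eobs 1 a) (Eobs β b) := by
  have hβ : 0 ≤ β := hb ▸ norm_nonneg b
  obtain ⟨hD, hDE, hDB⟩ := smul_amat_isLowerBound hab hb (by linarith) ht₁ htβ 1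
  refine ⟨_, isJointObs_of_posSemidef (by rw [eobs_zero, eobs_one]) (by rw [eobs_zero, eobs_one])
    ?_ (by rw [eobs_one]; exact hDB) hDE hD.1⟩
  rw [eobs_one, eobs_one, one_sub_amat, amat_sub, amat_smul, amat_add]
  refine posSemidef_amat ((le_of_eq ?_).trans (norm_smul_add_smul_le hab (x := -1) (y := t - 1)
    (by nlinarith) (by rw [hb]; nlinarith [mul_nonneg hβ (sub_nonneg.2 ht)])))
  congr 1; module

theorem no_maximal_joint_observable_general (a : E3) (β : ℝ)
    (hβ1 : (1 - ‖a‖ ^ 2) / 2 < β) (hβ2 : β < 1 - ‖a‖ ^ 2)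
    (b : E3) (hab : (inner ℝ a b : ℝ) = 0) (hb : ‖b‖ = β) :
    JointlyMeasurable2 (Eobs 1 a) (Eobs β b) ∧
      ¬ ∃ G : Fin 2 → Fin 2 → Mat2, IsJointObs G (Eobs 1 a) (Eobs β b) ∧
          ∀ i j, IsMaximalLB (G i j) (Eobs 1 a i) (Eobs β b j) := by
  have hβ : 0 < β := by linarith
  set t := (1 - ‖a‖ ^ 2) / (2 * β) with ht_def
  have htβ : 2 * t * β = 1 - ‖a‖ ^ 2 := by rw [ht_def]; field_simp
  have ht₁ : t < 1 := (div_lt_one (by positivity)).2 (by linarith)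
  have ht : 1 < 2 * t := by rw [mul_div, lt_div_iff₀ (by positivity)]; linarith
  refine ⟨jointlyMeasurable_eobs hab hb ht₁.le htβ ht.le, fun ⟨G, hG, hmax⟩ => ?_⟩
  have hlb := smul_amat_isLowerBound hab hb (by linarith) ht₁.le htβ
  obtain ⟨ρ₀, hG₀, hρ₀⟩ :=
    exists_eq_smul_ge_of_isMaximalLB hb hβ (eobs_one β b ▸ hmax 0 1) (hlb 0)
  obtain ⟨ρ₁, hG₁, hρ₁⟩ :=
    exists_eq_smul_ge_of_isMaximalLB hb hβ (eobs_one β b ▸ hmax 1 1) (hlb 1)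
  have hsum : ρ₀ + ρ₁ = 1 := by
    have h := hG.2.2.2 1
    rw [Fin.sum_univ_two, hG₀, hG₁, ← add_smul, eobs_one] at h
    exact smul_left_injective ℝ (amat_ne_zero hβ.ne' b) (h.trans (one_smul ℝ _).symm)
  linarith

/-- `E^{1,a}` and `E^{β,b}` are jointly measurable but have no maximal
joint observable. -/
theorem no_maximal_joint_observable (a : E3) (ha0 : 0 < ‖a‖) (ha1 : ‖a‖ < 1) (β : ℝ)
    (hβ1 : (1 - ‖a‖ ^ 2) / 2 < β) (hβ2 : β < 1 - ‖a‖ ^ 2)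
    (b : E3) (hab : (inner ℝ a b : ℝ) = 0) (hb : ‖b‖ = β) :
    JointlyMeasurable2 (Eobs 1 a) (Eobs β b) ∧
      ¬ ∃ G : Fin 2 → Fin 2 → Mat2, IsJointObs G (Eobs 1 a) (Eobs β b) ∧
          ∀ i j, IsMaximalLB (G i j) (Eobs 1 a i) (Eobs β b j) :=
  no_maximal_joint_observable_general a β hβ1 hβ2 b hab hb
end
end
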